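/- Let (Ω, Σ) be a measurable space, H and K separable complex Hilbert spaces, M ∈ O_Σ(H) an observable and E ∈ C(K;H) a channel that are compatible, i.e. there exists an instrument Γ ∈ I_Σ(K;H) with Γ(X, 1_K) = M(X) for all X ∈ Σ and Γ(Ω, ·) = E. If M is extremal in O_Σ(H) or E is extremal in C(K;H), then the joint instrument Γ is unique. -/

import Mathlib

open scoped ComplexOrder ComplexInnerProductSpace Topology

noncomputable section

/-- A linear map `Φ : A → L(H)` from a `*`-algebra into the bounded operators on a complex
Hilbert space `H` is *completely positive* if for all `n`, `a₁, …, aₙ ∈ A` and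
`φ₁, …, φₙ ∈ H` one has `∑ j k, ⟪φ j, Φ (star (a j) * a k) (φ k)⟫ ≥ 0`. -/
def IsCompletelyPositive {A : Type*} [NonUnitalNonAssocSemiring A] [StarRing A] [Module ℂ A]
    {H : Type*} [NormedAddCommGroup H] [InnerProductSpace ℂ H]
    (Φ : A →ₗ[ℂ] H →L[ℂ] H) : Prop :=
  ∀ (n : ℕ) (a : Fin n → A) (v : Fin n → H),
    0 ≤ ∑ j, ∑ k, ⟪v j, Φ (star (a j) * a k) (v k)⟫

/-- The convex set `CP_P(A;H)` of completely positive maps `Φ : A → L(H)` with `Φ 1 = P`. -/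
def CPWithUnit (A : Type*) [Ring A] [StarRing A] [Algebra ℂ A]
    (H : Type*) [NormedAddCommGroup H] [InnerProductSpace ℂ H]
    (P : H →L[ℂ] H) : Set (A →ₗ[ℂ] H →L[ℂ] H) :=
  {Φ | IsCompletelyPositive Φ ∧ Φ 1 = P}

/-- `x` is an extremal point of the convex set `S`: whenever `x` is a nontrivial convex
combination of two members of `S`, they coincide. -/
def IsExtremalIn {V : Type*} [AddCommMonoid V] [Module ℂ V] (S : Set V) (x : V) : Prop :=
  x ∈ S ∧ ∀ y ∈ S, ∀ z ∈ S, ∀ t : ℝ, 0 < t → t < 1 →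
    x = (t : ℂ) • y + ((1 - t : ℝ) : ℂ) • z → y = z

/-- The σ-weak (ultraweak) topology on `L(E)`, i.e. the coarsest topology making all
functionals `T ↦ ∑' n, ⟪x n, T (y n)⟫` (with `x, y` square-summable sequences) continuous. -/
def sigmaWeakTopology (E : Type*) [NormedAddCommGroup E] [InnerProductSpace ℂ E] :
    TopologicalSpace (E →L[ℂ] E) :=
  ⨅ (x : ℕ → E) (y : ℕ → E) (_ : Summable fun n => ‖x n‖ ^ 2)
    (_ : Summable fun n => ‖y n‖ ^ 2),
    TopologicalSpace.induced (fun T : E →L[ℂ] E => ∑' n, ⟪x n, T (y n)⟫) inferInstance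

/-- A map `Φ : L(K) → L(H)` is *normal* if it is continuous with respect to the
σ-weak (ultraweak) topologies. -/
def IsNormalMap {K H : Type*} [NormedAddCommGroup K] [InnerProductSpace ℂ K]
    [NormedAddCommGroup H] [InnerProductSpace ℂ H]
    (Φ : (K →L[ℂ] K) →ₗ[ℂ] (H →L[ℂ] H)) : Prop :=
  Continuous[sigmaWeakTopology K, sigmaWeakTopology H] ⇑Φ

/-- A channel (in the Heisenberg picture) from `H` to `K` is a normal unital completely
positive map `L(K) → L(H)`. -/
def IsChannel {K H : Type*} [NormedAddCommGroup K] [InnerProductSpace ℂ K] [CompleteSpace K]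
    [NormedAddCommGroup H] [InnerProductSpace ℂ H] [CompleteSpace H]
    (Φ : (K →L[ℂ] K) →ₗ[ℂ] (H →L[ℂ] H)) : Prop :=
  IsCompletelyPositive Φ ∧ IsNormalMap Φ ∧ Φ 1 = 1

/-- The convex set `C(K;H)` of channels. -/
def ChannelSet (K H : Type*) [NormedAddCommGroup K] [InnerProductSpace ℂ K] [CompleteSpace K]
    [NormedAddCommGroup H] [InnerProductSpace ℂ H] [CompleteSpace H] :
    Set ((K →L[ℂ] K) →ₗ[ℂ] (H →L[ℂ] H)) :=
  {Φ | IsChannel Φ}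

/-- A normalized positive operator valued measure (POVM, observable) on the measurable
space `Ω` with values in `L(H)`: positive operator values, `M univ = 1`, and σ-additivity
in the weak operator topology. -/
def IsPOVM {Ω : Type*} [MeasurableSpace Ω] {H : Type*}
    [NormedAddCommGroup H] [InnerProductSpace ℂ H] [CompleteSpace H]
    (M : Set Ω → H →L[ℂ] H) : Prop :=
  (∀ X : Set Ω, MeasurableSet X → (M X).IsPositive) ∧
  M Set.univ = 1 ∧
  ∀ f : ℕ → Set Ω, (∀ n, MeasurableSet (f n)) → Pairwise (Function.onFun Disjoint f) →
    ∀ x y : H, HasSum (fun n => ⟪x, M (f n) y⟫) ⟪x, M (⋃ n, f n) y⟫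

/-- A POVM is extremal in the convex set of all POVMs on the same σ-algebra. -/
def IsExtremalPOVM {Ω : Type*} [MeasurableSpace Ω] {H : Type*}
    [NormedAddCommGroup H] [InnerProductSpace ℂ H] [CompleteSpace H]
    (M : Set Ω → H →L[ℂ] H) : Prop :=
  IsPOVM M ∧ ∀ M₁ M₂ : Set Ω → H →L[ℂ] H, IsPOVM M₁ → IsPOVM M₂ →
    ∀ t : ℝ, 0 < t → t < 1 →
    (∀ X : Set Ω, MeasurableSet X → M X = (t : ℂ) • M₁ X + ((1 - t : ℝ) : ℂ) • M₂ X) →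
    ∀ X : Set Ω, MeasurableSet X → M₁ X = M₂ X

/-- An instrument `Γ ∈ I_Σ(K;H)`: a map `Γ : Σ × L(K) → L(H)` such that each
`Γ(X, ·)` is a normal completely positive linear map, `Γ(·, B)` is an operator measure
(σ-additive in the weak operator topology) for every `B`, `Γ(·, 1)` is a POVM and
`Γ(Ω, ·)` is a channel. -/
def IsInstrument {Ω : Type*} [MeasurableSpace Ω] {K H : Type*}
    [NormedAddCommGroup K] [InnerProductSpace ℂ K] [CompleteSpace K]
    [NormedAddCommGroup H] [InnerProductSpace ℂ H] [CompleteSpace H]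
    (Γ : Set Ω → ((K →L[ℂ] K) →ₗ[ℂ] (H →L[ℂ] H))) : Prop :=
  (∀ X : Set Ω, MeasurableSet X → IsCompletelyPositive (Γ X)) ∧
  (∀ X : Set Ω, MeasurableSet X → IsNormalMap (Γ X)) ∧
  IsPOVM (fun X => Γ X 1) ∧
  (∀ (B : K →L[ℂ] K) (f : ℕ → Set Ω), (∀ n, MeasurableSet (f n)) →
    Pairwise (Function.onFun Disjoint f) → ∀ x y : H,
      HasSum (fun n => ⟪x, Γ (f n) B y⟫) ⟪x, Γ (⋃ n, f n) B y⟫) ∧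
  IsChannel (Γ Set.univ)

/-- An instrument is extremal in the convex set `I_Σ(K;H)` of all instruments. -/
def IsExtremalInstrument {Ω : Type*} [MeasurableSpace Ω] {K H : Type*}
    [NormedAddCommGroup K] [InnerProductSpace ℂ K] [CompleteSpace K]
    [NormedAddCommGroup H] [InnerProductSpace ℂ H] [CompleteSpace H]
    (Γ : Set Ω → ((K →L[ℂ] K) →ₗ[ℂ] (H →L[ℂ] H))) : Prop :=
  IsInstrument Γ ∧ ∀ Γ₁ Γ₂ : Set Ω → ((K →L[ℂ] K) →ₗ[ℂ] (H →L[ℂ] H)),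
    IsInstrument Γ₁ → IsInstrument Γ₂ → ∀ t : ℝ, 0 < t → t < 1 →
    (∀ X : Set Ω, MeasurableSet X → Γ X = (t : ℂ) • Γ₁ X + ((1 - t : ℝ) : ℂ) • Γ₂ X) →
    ∀ X : Set Ω, MeasurableSet X → Γ₁ X = Γ₂ X

/-- The observable `M` and the channel `E` are compatible with joint instrument `Γ`:
`Γ(X, 1) = M X` for all measurable `X` and `Γ(Ω, ·) = E`. -/
def IsJointInstrument {Ω : Type*} [MeasurableSpace Ω] {K H : Type*}
    [NormedAddCommGroup K] [InnerProductSpace ℂ K] [CompleteSpace K]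
    [NormedAddCommGroup H] [InnerProductSpace ℂ H] [CompleteSpace H]
    (Γ : Set Ω → ((K →L[ℂ] K) →ₗ[ℂ] (H →L[ℂ] H)))
    (M : Set Ω → H →L[ℂ] H) (E : (K →L[ℂ] K) →ₗ[ℂ] (H →L[ℂ] H)) : Prop :=
  IsInstrument Γ ∧ (∀ X : Set Ω, MeasurableSet X → Γ X 1 = M X) ∧ Γ Set.univ = E

/-!
Two joint instruments `Γ, Γ'` of `M` and `E` can be crossed over. For an effect `0 ≤ B ≤ 1`,
`Y ↦ Γ Y B + Γ' Y (1 - B)` and `Y ↦ Γ' Y B + Γ Y (1 - B)` are observables whose average is `M`;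
for a measurable `X`, `Γ X + Γ' Xᶜ` and `Γ' X + Γ Xᶜ` are channels whose average is `E`.
Extremality of `M` (resp. `E`) makes the two crossed objects equal, which yields
`Γ X B = Γ' X B` for every effect `B` (resp. `Γ X = Γ' X`), and effects span `L(K)`.
-/

lemma eq_of_add_eq_add_of_add_eq_add_swap {V : Type*} [AddCommGroup V] [Module ℂ V]
    {a a' b b' : V} (h₁ : a + b = a' + b') (h₂ : a + b' = a' + b) : a = a' := by
  have h : (2 : ℂ) • a = (2 : ℂ) • a' := by
    rw [two_smul, two_smul]
    linear_combination (norm := abel) h₁ + h₂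
  exact smul_right_injective V two_ne_zero h

lemma eq_half_smul_add_half_smul {V : Type*} [AddCommGroup V] [Module ℂ V] {x y z : V}
    (h : y + z = x + x) : x = ((1 / 2 : ℝ) : ℂ) • y + ((1 - 1 / 2 : ℝ) : ℂ) • z := by
  rw [show (1 - 1 / 2 : ℝ) = 1 / 2 by norm_num, ← smul_add, h, ← two_smul ℂ, smul_smul]
  norm_num

lemma IsExtremalIn.eq_of_add_eq {V : Type*} [AddCommGroup V] [Module ℂ V] {S : Set V}
    {x y z : V} (hx : IsExtremalIn S x) (hy : y ∈ S) (hz : z ∈ S) (h : y + z = x + x) :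
    y = z :=
  hx.2 y hy z hz (1 / 2) (by norm_num) (by norm_num) (eq_half_smul_add_half_smul h)

lemma LinearMap.ext_on_Icc_zero_one {A V : Type*} [CStarAlgebra A] [PartialOrder A]
    [StarOrderedRing A] [AddCommMonoid V] [Module ℂ V] {f g : A →ₗ[ℂ] V}
    (h : Set.EqOn f g (Set.Icc 0 1)) : f = g :=
  LinearMap.ext_on CStarAlgebra.span_nonneg_inter_unitClosedBall fun _ ⟨ha₀, ha₁⟩ =>
    h (CStarAlgebra.mem_Icc_iff_norm_le_one.2 ⟨ha₀, mem_closedBall_zero_iff.1 ha₁⟩)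

section Operators

variable {K H : Type*} [NormedAddCommGroup K] [InnerProductSpace ℂ K]
  [NormedAddCommGroup H] [InnerProductSpace ℂ H]

lemma ContinuousLinearMap.isPositive_of_forall_inner_nonneg {T : H →L[ℂ] H}
    (h : ∀ x, 0 ≤ ⟪x, T x⟫) : T.IsPositive := by
  rw [isPositive_iff_complex]
  intro x
  have hx : 0 ≤ ⟪T x, x⟫ := by
    rw [← inner_conj_symm (T x) x]
    exact star_nonneg_iff.2 (h x)
  obtain ⟨hre, him⟩ := Complex.nonneg_iff.1 hx
  exact ⟨Complex.ext (by simp) (by simp [← him]), hre⟩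

lemma IsCompletelyPositive.isPositive_apply {A : Type*} [NonUnitalSemiring A] [PartialOrder A]
    [StarRing A] [StarOrderedRing A] [Module ℂ A] {Φ : A →ₗ[ℂ] H →L[ℂ] H}
    (hΦ : IsCompletelyPositive Φ) {a : A} (ha : 0 ≤ a) : (Φ a).IsPositive := by
  rw [StarOrderedRing.nonneg_iff] at ha
  induction ha using AddSubmonoid.closure_induction with
  | mem _ hs =>
    obtain ⟨s, rfl⟩ := hs
    refine ContinuousLinearMap.isPositive_of_forall_inner_nonneg fun v => ?_
    simpa using hΦ 1 (fun _ => s) (fun _ => v)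
  | zero => simp
  | add _ _ _ _ h₁ h₂ => simpa using h₁.add h₂

lemma IsCompletelyPositive.add {A : Type*} [NonUnitalNonAssocSemiring A] [StarRing A]
    [Module ℂ A] {Φ₁ Φ₂ : A →ₗ[ℂ] H →L[ℂ] H} (h₁ : IsCompletelyPositive Φ₁)
    (h₂ : IsCompletelyPositive Φ₂) : IsCompletelyPositive (Φ₁ + Φ₂) := fun n a v => by
  simpa [inner_add_right, Finset.sum_add_distrib] using add_nonneg (h₁ n a v) (h₂ n a v)

lemma summable_inner_apply {x y : ℕ → H} (hx : Summable fun n => ‖x n‖ ^ 2)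
    (hy : Summable fun n => ‖y n‖ ^ 2) (T : H →L[ℂ] H) :
    Summable fun n => ⟪x n, T (y n)⟫ := by
  refine Summable.of_norm_bounded ((hx.add hy).mul_left (‖T‖ / 2)) fun n => ?_
  calc ‖⟪x n, T (y n)⟫‖ ≤ ‖x n‖ * (‖T‖ * ‖y n‖) :=
        (norm_inner_le_norm _ _).trans (by gcongr; exact T.le_opNorm _)
    _ = ‖T‖ / 2 * (2 * ‖x n‖ * ‖y n‖) := by ring
    _ ≤ ‖T‖ / 2 * (‖x n‖ ^ 2 + ‖y n‖ ^ 2) := by gcongr; exact two_mul_le_add_sq _ _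

lemma continuous_sigmaWeakTopology_iff {α : Type*} {t : TopologicalSpace α}
    {f : α → H →L[ℂ] H} :
    Continuous[t, sigmaWeakTopology H] f ↔
      ∀ x y : ℕ → H, Summable (fun n => ‖x n‖ ^ 2) → Summable (fun n => ‖y n‖ ^ 2) →
        Continuous[t, _] fun a => ∑' n, ⟪x n, f a (y n)⟫ := by
  unfold sigmaWeakTopology
  simp only [continuous_iInf_rng, continuous_induced_rng]
  rfl

lemma IsNormalMap.add {Φ₁ Φ₂ : (K →L[ℂ] K) →ₗ[ℂ] (H →L[ℂ] H)} (h₁ : IsNormalMap Φ₁)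
    (h₂ : IsNormalMap Φ₂) : IsNormalMap (Φ₁ + Φ₂) := by
  let := sigmaWeakTopology K
  rw [IsNormalMap, continuous_sigmaWeakTopology_iff] at h₁ h₂ ⊢
  intro x y hx hy
  convert (h₁ x y hx hy).add (h₂ x y hx hy) using 2 with B
  simp only [LinearMap.add_apply, FunLike.coe_add, Pi.add_apply, inner_add_right]
  exact (summable_inner_apply hx hy _).tsum_add (summable_inner_apply hx hy _)

end Operators

section OperatorMeasures

variable {Ω : Type*} [MeasurableSpace Ω] {H : Type*} [NormedAddCommGroup H]
  [InnerProductSpace ℂ H]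

def IsWeakOperatorMeasure (m : Set Ω → H →L[ℂ] H) : Prop :=
  ∀ f : ℕ → Set Ω, (∀ n, MeasurableSet (f n)) → Pairwise (Function.onFun Disjoint f) →
    ∀ x y : H, HasSum (fun n => ⟪x, m (f n) y⟫) ⟪x, m (⋃ n, f n) y⟫

namespace IsWeakOperatorMeasure

variable {m m₁ m₂ : Set Ω → H →L[ℂ] H}

lemma empty (hm : IsWeakOperatorMeasure m) : m ∅ = 0 := by
  ext y
  refine ext_inner_left ℂ fun x => ?_
  have h := hm (fun _ => ∅) (fun _ => .empty) (fun _ _ _ => Set.disjoint_empty _) x y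
  rw [Set.iUnion_empty] at h
  simpa using tendsto_nhds_unique tendsto_const_nhds h.summable.tendsto_atTop_zero

lemma union (hm : IsWeakOperatorMeasure m) {X Y : Set Ω} (hX : MeasurableSet X)
    (hY : MeasurableSet Y) (hXY : Disjoint X Y) : m (X ∪ Y) = m X + m Y := by
  ext z
  refine ext_inner_left ℂ fun x => ?_
  let f : ℕ → Set Ω := fun n => if n = 0 then X else if n = 1 then Y else ∅
  have hf : ∀ n, MeasurableSet (f n) := fun n => by
    dsimp only [f]; split_ifs <;> simp [hX, hY]
  have hd : Pairwise (Function.onFun Disjoint f) := fun i j hij => by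
    rcases i with _ | _ | i <;> rcases j with _ | _ | j <;>
      simp_all [f, Function.onFun, hXY.symm]
  have hU : ⋃ n, f n = X ∪ Y :=
    (Set.iUnion_subset fun n => by dsimp only [f]; split_ifs <;> simp).antisymm
      (Set.union_subset (Set.subset_iUnion f 0) (Set.subset_iUnion f 1))
  have hsum : HasSum (fun n => ⟪x, m (f n) z⟫) (⟪x, m X z⟫ + ⟪x, m Y z⟫) := by
    have h := hasSum_sum_of_ne_finset_zero (f := fun n => ⟪x, m (f n) z⟫)
      (L := SummationFilter.unconditional ℕ) (s := Finset.range 2) fun n hn => by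
        simp only [Finset.mem_range, not_lt] at hn
        simp [f, if_neg (show n ≠ 0 by omega), if_neg (show n ≠ 1 by omega), hm.empty]
    simpa [Finset.sum_range_succ, f] using h
  rw [← hU]
  simpa [inner_add_right] using (hm f hf hd x z).unique hsum

lemma add (h₁ : IsWeakOperatorMeasure m₁) (h₂ : IsWeakOperatorMeasure m₂) :
    IsWeakOperatorMeasure fun X => m₁ X + m₂ X := fun f hf hd x y => by
  simpa [inner_add_right] using (h₁ f hf hd x y).add (h₂ f hf hd x y)

end IsWeakOperatorMeasure

end OperatorMeasures

section Instruments

variable {Ω : Type*} [MeasurableSpace Ω] {K H : Type*}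
  [NormedAddCommGroup K] [InnerProductSpace ℂ K] [CompleteSpace K]
  [NormedAddCommGroup H] [InnerProductSpace ℂ H] [CompleteSpace H]
  {Γ Δ Δ' : Set Ω → ((K →L[ℂ] K) →ₗ[ℂ] (H →L[ℂ] H))} {M : Set Ω → H →L[ℂ] H}
  {E : (K →L[ℂ] K) →ₗ[ℂ] (H →L[ℂ] H)} {X : Set Ω}

lemma IsExtremalPOVM.eq_of_add_eq {M₁ M₂ : Set Ω → H →L[ℂ] H} (hM : IsExtremalPOVM M)
    (h₁ : IsPOVM M₁) (h₂ : IsPOVM M₂) (h : ∀ Y, MeasurableSet Y → M₁ Y + M₂ Y = M Y + M Y)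
    (hX : MeasurableSet X) : M₁ X = M₂ X :=
  hM.2 M₁ M₂ h₁ h₂ (1 / 2) (by norm_num) (by norm_num)
    (fun Y hY => eq_half_smul_add_half_smul (h Y hY)) X hX

namespace IsInstrument

lemma isWeakOperatorMeasure (hΓ : IsInstrument Γ) (B : K →L[ℂ] K) :
    IsWeakOperatorMeasure fun X => Γ X B :=
  hΓ.2.2.2.1 B

lemma apply_univ_one (hΓ : IsInstrument Γ) : Γ Set.univ 1 = 1 :=
  hΓ.2.2.2.2.2.2

lemma add_compl (hΓ : IsInstrument Γ) (hX : MeasurableSet X) : Γ X + Γ Xᶜ = Γ Set.univ :=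
  LinearMap.ext fun B => by
    rw [LinearMap.add_apply, ← (hΓ.isWeakOperatorMeasure B).union hX hX.compl
      disjoint_compl_right, Set.union_compl_self]

lemma isPOVM_mix (hΔ : IsInstrument Δ) (hΔ' : IsInstrument Δ')
    (huniv : Δ Set.univ = Δ' Set.univ) {B : K →L[ℂ] K} (hB : B ∈ Set.Icc 0 1) :
    IsPOVM fun Y => Δ Y B + Δ' Y (1 - B) := by
  refine ⟨fun Y hY => ?_, ?_, ?_⟩
  · have h1B : (0 : K →L[ℂ] K) ≤ 1 - B := sub_nonneg.2 hB.2
    exact ((hΔ.1 Y hY).isPositive_apply hB.1).add ((hΔ'.1 Y hY).isPositive_apply h1B)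
  · change Δ Set.univ B + Δ' Set.univ (1 - B) = 1
    rw [huniv, ← map_add, add_sub_cancel, hΔ'.apply_univ_one]
  · exact IsWeakOperatorMeasure.add (m₁ := fun Y => Δ Y B) (m₂ := fun Y => Δ' Y (1 - B))
      (hΔ.isWeakOperatorMeasure _) (hΔ'.isWeakOperatorMeasure _)

lemma isChannel_add_compl (hΔ : IsInstrument Δ) (hΔ' : IsInstrument Δ') (hX : MeasurableSet X)
    (h1 : Δ X 1 = Δ' X 1) : IsChannel (Δ X + Δ' Xᶜ) := by
  refine ⟨(hΔ.1 X hX).add (hΔ'.1 _ hX.compl), (hΔ.2.1 X hX).add (hΔ'.2.1 _ hX.compl), ?_⟩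
  rw [LinearMap.add_apply, h1, ← LinearMap.add_apply, hΔ'.add_compl hX, hΔ'.apply_univ_one]

end IsInstrument

namespace IsJointInstrument

variable {Γ' : Set Ω → ((K →L[ℂ] K) →ₗ[ℂ] (H →L[ℂ] H))}

lemma apply_add_apply_one_sub (hΓ : IsJointInstrument Γ M E) (B : K →L[ℂ] K)
    {Y : Set Ω} (hY : MeasurableSet Y) : Γ Y B + Γ Y (1 - B) = M Y := by
  rw [← map_add, add_sub_cancel, hΓ.2.1 Y hY]

lemma apply_eq_of_isExtremalPOVM (hΓ : IsJointInstrument Γ M E)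
    (hΓ' : IsJointInstrument Γ' M E) (hM : IsExtremalPOVM M) (hX : MeasurableSet X) :
    Γ X = Γ' X := by
  have huniv : Γ Set.univ = Γ' Set.univ := hΓ.2.2.trans hΓ'.2.2.symm
  refine LinearMap.ext_on_Icc_zero_one fun B hB => ?_
  have hcross : Γ X B + Γ' X (1 - B) = Γ' X B + Γ X (1 - B) :=
    hM.eq_of_add_eq (hΓ.1.isPOVM_mix hΓ'.1 huniv hB) (hΓ'.1.isPOVM_mix hΓ.1 huniv.symm hB)
      (fun Y hY => by
        linear_combination (norm := abel)
          hΓ.apply_add_apply_one_sub B hY + hΓ'.apply_add_apply_one_sub B hY) hX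
  exact eq_of_add_eq_add_of_add_eq_add_swap
    ((hΓ.apply_add_apply_one_sub B hX).trans (hΓ'.apply_add_apply_one_sub B hX).symm) hcross

lemma apply_eq_of_isExtremalIn_channelSet (hΓ : IsJointInstrument Γ M E)
    (hΓ' : IsJointInstrument Γ' M E) (hE : IsExtremalIn (ChannelSet K H) E)
    (hX : MeasurableSet X) : Γ X = Γ' X := by
  have h1 : Γ X 1 = Γ' X 1 := (hΓ.2.1 X hX).trans (hΓ'.2.1 X hX).symm
  have hΓE : Γ X + Γ Xᶜ = E := (hΓ.1.add_compl hX).trans hΓ.2.2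
  have hΓ'E : Γ' X + Γ' Xᶜ = E := (hΓ'.1.add_compl hX).trans hΓ'.2.2
  have hcross : Γ X + Γ' Xᶜ = Γ' X + Γ Xᶜ :=
    hE.eq_of_add_eq (hΓ.1.isChannel_add_compl hΓ'.1 hX h1)
      (hΓ'.1.isChannel_add_compl hΓ.1 hX h1.symm)
      (by linear_combination (norm := abel) hΓE + hΓ'E)
  exact eq_of_add_eq_add_of_add_eq_add_swap (hΓE.trans hΓ'E.symm) hcross

end IsJointInstrument

end Instruments

theorem joint_instrument_unique_of_extremal_marginal
    {Ω : Type*} [MeasurableSpace Ω] {K H : Type*}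
    [NormedAddCommGroup K] [InnerProductSpace ℂ K] [CompleteSpace K]
    [NormedAddCommGroup H] [InnerProductSpace ℂ H] [CompleteSpace H]
    (M : Set Ω → H →L[ℂ] H)
    (E : (K →L[ℂ] K) →ₗ[ℂ] (H →L[ℂ] H))
    (Γ Γ' : Set Ω → ((K →L[ℂ] K) →ₗ[ℂ] (H →L[ℂ] H)))
    (hΓ : IsJointInstrument Γ M E) (hΓ' : IsJointInstrument Γ' M E)
    (hext : IsExtremalPOVM M ∨ IsExtremalIn (ChannelSet K H) E) :
    ∀ X : Set Ω, MeasurableSet X → Γ X = Γ' X := by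
  intro X hX
  rcases hext with hM | hE
  · exact hΓ.apply_eq_of_isExtremalPOVM hΓ' hM hX
  · exact hΓ.apply_eq_of_isExtremalIn_channelSet hΓ' hE hX
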